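/- Consider the system dη/dν = 1 − η² + ζ² − η²ζ, dζ/dν = −η(1 + ζ²), and let F(η,ζ) = ((1 + ζ²)/(η² − ζ² − 1))·exp(−2·arctan(1/ζ)) on the set G = {(η,ζ) : ζ ≠ 0 and η² − ζ² ≠ 1}. Then F is differentiable on G and (1 − η² + ζ² − η²ζ)·∂F/∂η(η,ζ) + (−η(1 + ζ²))·∂F/∂ζ(η,ζ) = 0 for all (η,ζ) ∈ G; that is, F is a general autonomous integral of the system on any domain contained in G. -/

import Mathlib

/-! Along the vector field `(X, Y)`, the logarithmic derivative of
`F = (1 + ζ²) e^{-2 arctan(1/ζ)} / D`, `D = η² − ζ² − 1`, is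
`X·(−2η/D) + Y·(2(1 + ζ)/(1 + ζ²) + 2ζ/D)`. Since `X + ζ(1 + ζ²) = −(1 + ζ) D`, the two terms over `D`
add up to `2η(1 + ζ)`, which `Y·2(1 + ζ)/(1 + ζ²) = −2η(1 + ζ)` cancels. -/

/-- `F(η,ζ) = ((1 + ζ²)/(η² − ζ² − 1))·exp(−2·arctan(1/ζ))`. -/
noncomputable def F9 : ℝ × ℝ → ℝ :=
  fun p => ((1 + p.2 ^ 2) / (p.1 ^ 2 - p.2 ^ 2 - 1)) *
    Real.exp (-2 * Real.arctan (1 / p.2))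

open Real ContinuousLinearMap

lemma hasDerivAt_arctan_one_div {t : ℝ} (ht : t ≠ 0) :
    HasDerivAt (fun s => arctan (1 / s)) (-(1 / (1 + t ^ 2))) t := by
  have h := (hasDerivAt_inv ht).arctan
  simp only [one_div] at h ⊢
  convert h using 1
  field_simp
  ring

lemma hasDerivAt_one_add_sq_mul_exp_arctan {t : ℝ} (ht : t ≠ 0) :
    HasDerivAt (fun s => (1 + s ^ 2) * exp (-2 * arctan (1 / s)))
      ((1 + t ^ 2) * exp (-2 * arctan (1 / t)) * (2 * (1 + t) / (1 + t ^ 2))) t := by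
  refine (((hasDerivAt_pow 2 t).const_add 1).fun_mul
    ((hasDerivAt_arctan_one_div ht).const_mul (-2)).exp).congr_deriv ?_
  have : 1 + t ^ 2 ≠ 0 := by positivity
  field_simp
  ring

lemma hasFDerivAt_F9 {p : ℝ × ℝ} (hy : p.2 ≠ 0) (hD : p.1 ^ 2 - p.2 ^ 2 - 1 ≠ 0) :
    HasFDerivAt F9 (F9 p • ((-2 * p.1 / (p.1 ^ 2 - p.2 ^ 2 - 1)) • fst ℝ ℝ ℝ +
      (2 * (1 + p.2) / (1 + p.2 ^ 2) + 2 * p.2 / (p.1 ^ 2 - p.2 ^ 2 - 1)) • snd ℝ ℝ ℝ)) p := by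
  have hNum := (hasDerivAt_one_add_sq_mul_exp_arctan hy).comp_hasFDerivAt p
    (hasFDerivAt_snd (𝕜 := ℝ) (p := p))
  have hInv := (hasDerivAt_inv hD).comp_hasFDerivAt p
    (((hasFDerivAt_fst (𝕜 := ℝ) (p := p)).pow 2).fun_sub
      ((hasFDerivAt_snd (𝕜 := ℝ) (p := p)).pow 2) |>.sub_const 1)
  have hF : F9 = fun q => ((1 + q.2 ^ 2) * exp (-2 * arctan (1 / q.2))) *
      (q.1 ^ 2 - q.2 ^ 2 - 1)⁻¹ := by
    funext q; simp only [F9]; ring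
  rw [hF]
  refine (hNum.fun_mul hInv).congr_fderiv ?_
  have hN : 1 + p.2 ^ 2 ≠ 0 := by positivity
  refine ContinuousLinearMap.ext fun q => ?_
  simp only [Function.comp_apply, add_apply, smul_apply, sub_apply, coe_fst', coe_snd',
    smul_eq_mul, nsmul_eq_mul]
  field_simp
  ring

/-- `F` is a general autonomous integral of the system
`dη/dν = 1 − η² + ζ² − η²ζ`, `dζ/dν = −η(1 + ζ²)` on
`G = {(η,ζ) : ζ ≠ 0 ∧ η² − ζ² ≠ 1}`. -/
theorem F9_general_autonomous_integral :
    ∀ p : ℝ × ℝ, p.2 ≠ 0 → p.1 ^ 2 - p.2 ^ 2 ≠ 1 →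
      DifferentiableAt ℝ F9 p ∧
      (1 - p.1 ^ 2 + p.2 ^ 2 - p.1 ^ 2 * p.2) * fderiv ℝ F9 p (1, 0) +
        (-(p.1 * (1 + p.2 ^ 2))) * fderiv ℝ F9 p (0, 1) = 0 := by
  rintro ⟨x, y⟩ hy hxy
  have hD : x ^ 2 - y ^ 2 - 1 ≠ 0 := sub_ne_zero.mpr hxy
  have hF := hasFDerivAt_F9 (p := (x, y)) hy hD
  refine ⟨hF.differentiableAt, ?_⟩
  have hN : 1 + y ^ 2 ≠ 0 := by positivity
  have hlog : (1 - x ^ 2 + y ^ 2 - x ^ 2 * y) * (-2 * x / (x ^ 2 - y ^ 2 - 1)) +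
      (-(x * (1 + y ^ 2))) * (2 * (1 + y) / (1 + y ^ 2) + 2 * y / (x ^ 2 - y ^ 2 - 1)) = 0 := by
    field_simp
    ring
  rw [hF.fderiv]
  simp only [smul_apply, add_apply, coe_fst', coe_snd', smul_eq_mul]
  linear_combination F9 (x, y) * hlog
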